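/- Let q ≥ 1 and let x = (x₁,…,x_q), x' = (x'₁,…,x'_q) be nonnegative vectors with Σx_i = Σx'_i = h ≤ 1. Let A_x (resp. A_{x'}) be the set of probability distributions a on [q] with a_i ≥ x_i (resp. a_i ≥ x'_i) for all i. Then for every a ∈ A_x there exists b ∈ A_{x'} with ‖a − b‖₁ ≤ ‖x − x'‖₁; consequently for every bounded graphon W and symmetric q×q matrix J, |E^x(W,J) − E^{x'}(W,J)| ≤ 2·‖x − x'‖₁·‖W‖_∞·‖J‖_∞, where E^x(W,J) = inf_{a ∈ A_x} E_a(W,J). -/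

import Mathlib

open MeasureTheory Filter

noncomputable section

/-- The unit interval as a subset of ℝ. -/
def I01 : Set ℝ := Set.Icc 0 1

/-- A `q`-fractional partition: measurable functions `ρ i : [0,1] → [0,1]`
summing pointwise to `1` on `[0,1]`. -/
structure FracPartition (q : ℕ) where
  toFun : Fin q → ℝ → ℝ
  measurable : ∀ i, Measurable (toFun i)
  mem_I01 : ∀ i x, x ∈ I01 → toFun i x ∈ I01
  sum_one : ∀ x ∈ I01, ∑ i, toFun i x = 1

/-- Energy of a fractional partition with respect to a graphon `W` and matrix `J`. -/
def energy {q : ℕ} (W : ℝ → ℝ → ℝ) (J : Matrix (Fin q) (Fin q) ℝ)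
    (ρ : FracPartition q) : ℝ :=
  - ∑ i, ∑ j, J i j * ∫ x in I01, ∫ y in I01, ρ.toFun i x * ρ.toFun j y * W x y

/-- `a` is a probability distribution on `Fin q`. -/
def IsDist {q : ℕ} (a : Fin q → ℝ) : Prop :=
  (∀ i, 0 ≤ a i) ∧ ∑ i, a i = 1

/-- Microcanonical ground state energy. -/
def mgse {q : ℕ} (W : ℝ → ℝ → ℝ) (J : Matrix (Fin q) (Fin q) ℝ) (a : Fin q → ℝ) : ℝ :=
  sInf {e | ∃ ρ : FracPartition q, (∀ i, (∫ x in I01, ρ.toFun i x) = a i) ∧ e = energy W J ρ}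

/-- General lower threshold ground state energy with threshold vector `x`. -/
def ltgseV {q : ℕ} (W : ℝ → ℝ → ℝ) (J : Matrix (Fin q) (Fin q) ℝ) (x : Fin q → ℝ) : ℝ :=
  sInf {e | ∃ a : Fin q → ℝ, IsDist a ∧ (∀ i, x i ≤ a i) ∧ e = mgse W J a}

/-- Homogeneous lower threshold ground state energy with scalar threshold `c`. -/
def ltgse {q : ℕ} (W : ℝ → ℝ → ℝ) (J : Matrix (Fin q) (Fin q) ℝ) (c : ℝ) : ℝ :=
  ltgseV W J (fun _ => c)

/-- Unrestricted ground state energy. -/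
def gse {q : ℕ} (W : ℝ → ℝ → ℝ) (J : Matrix (Fin q) (Fin q) ℝ) : ℝ :=
  sInf {e | ∃ ρ : FracPartition q, e = energy W J ρ}

/-- `W` is a graphon: a bounded symmetric measurable function. -/
def IsGraphon (W : ℝ → ℝ → ℝ) : Prop :=
  Measurable (Function.uncurry W) ∧ (∀ x y, W x y = W y x) ∧ ∃ M, ∀ x y, |W x y| ≤ M

/-! Given a fractional partition with marginals `a`, let every colour `i` give up the excess
mass `(aᵢ - bᵢ)⁺` to a common pool and hand the pool out in the proportions `(aᵢ - bᵢ)⁻`: the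
result has marginals `b` and lies at L¹-distance at most `‖a - b‖₁`. The energy is a quadratic
form whose bilinear part is bounded by `‖W‖_∞ ‖J‖_∞` times the L¹ norms, so it moves by at most
twice that. For the thresholds, `a ↦ a - x + x'` maps `A_x` into `A_{x'}` at distance
`‖x - x'‖₁`; taking infima in both directions gives the bound on `E^x - E^{x'}`. -/

section IteratedIntegral

variable {α : Type*} [MeasurableSpace α] {μ : Measure α} {W : α → α → ℝ} {C : ℝ}

theorem abs_integral_integral_mul_le {f g : α → ℝ} (hf : Integrable f μ) (hg : Integrable g μ)
    (hWb : ∀ x y, |W x y| ≤ C) :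
    |∫ x, ∫ y, f x * g y * W x y ∂μ ∂μ| ≤ C * (∫ x, |f x| ∂μ) * ∫ y, |g y| ∂μ := by
  have inner : ∀ x, |∫ y, f x * g y * W x y ∂μ| ≤ |f x| * (C * ∫ y, |g y| ∂μ) := by
    intro x
    calc |∫ y, f x * g y * W x y ∂μ| ≤ ∫ y, |f x| * C * |g y| ∂μ := by
          rw [← Real.norm_eq_abs]
          refine norm_integral_le_of_norm_le (hg.abs.const_mul _) (ae_of_all _ fun y => ?_)
          rw [Real.norm_eq_abs, abs_mul, abs_mul, mul_right_comm]
          exact mul_le_mul_of_nonneg_right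
            (mul_le_mul_of_nonneg_left (hWb x y) (abs_nonneg _)) (abs_nonneg _)
      _ = |f x| * (C * ∫ y, |g y| ∂μ) := by rw [integral_const_mul, mul_assoc]
  calc |∫ x, ∫ y, f x * g y * W x y ∂μ ∂μ| ≤ ∫ x, |f x| * (C * ∫ y, |g y| ∂μ) ∂μ := by
        rw [← Real.norm_eq_abs]
        exact norm_integral_le_of_norm_le (hf.abs.mul_const _) (ae_of_all _ inner)
    _ = C * (∫ x, |f x| ∂μ) * ∫ y, |g y| ∂μ := by rw [integral_mul_const]; ring

theorem integrable_prod_mul_mul {f g : α → ℝ} (hf : Integrable f μ) (hg : Integrable g μ)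
    (hW : Measurable (Function.uncurry W)) (hWb : ∀ x y, |W x y| ≤ C) :
    Integrable (fun z : α × α => f z.1 * g z.2 * W z.1 z.2) (μ.prod μ) :=
  (hf.mul_prod hg).mul_bdd (g := Function.uncurry W) hW.aestronglyMeasurable
    (ae_of_all _ fun z => hWb z.1 z.2)

theorem integral_integral_mul_sub_mul [SFinite μ] {f f' g g' : α → ℝ}
    (hf : Integrable f μ) (hf' : Integrable f' μ) (hg : Integrable g μ) (hg' : Integrable g' μ)
    (hW : Measurable (Function.uncurry W)) (hWb : ∀ x y, |W x y| ≤ C) :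
    ∫ x, ∫ y, f' x * g' y * W x y ∂μ ∂μ - ∫ x, ∫ y, f x * g y * W x y ∂μ ∂μ =
      ∫ x, ∫ y, (f' x - f x) * g' y * W x y ∂μ ∂μ +
        ∫ x, ∫ y, f x * (g' y - g y) * W x y ∂μ ∂μ := by
  have hint : ∀ u v : α → ℝ, Integrable u μ → Integrable v μ →
      Integrable (fun z : α × α => u z.1 * v z.2 * W z.1 z.2) (μ.prod μ) :=
    fun u v hu hv => integrable_prod_mul_mul hu hv hW hWb
  have toProd : ∀ u v : α → ℝ, Integrable u μ → Integrable v μ →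
      ∫ x, ∫ y, u x * v y * W x y ∂μ ∂μ = ∫ z, u z.1 * v z.2 * W z.1 z.2 ∂(μ.prod μ) :=
    fun u v hu hv => (integral_prod _ (hint u v hu hv)).symm
  have hdf : Integrable (fun x => f' x - f x) μ := hf'.sub hf
  have hdg : Integrable (fun y => g' y - g y) μ := hg'.sub hg
  rw [toProd _ _ hf' hg', toProd _ _ hf hg, toProd _ _ hdf hg', toProd _ _ hf hdg,
    ← integral_sub (hint _ _ hf' hg') (hint _ _ hf hg),
    ← integral_add (hint _ _ hdf hg') (hint _ _ hf hdg)]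
  congr 1 with z
  ring

end IteratedIntegral

theorem abs_sum_sum_mul_le {ι : Type*} [Fintype ι] {J c u : ι → ι → ℝ} {Jmax : ℝ}
    (hJb : ∀ i j, |J i j| ≤ Jmax) (hc : ∀ i j, |c i j| ≤ u i j) :
    |∑ i, ∑ j, J i j * c i j| ≤ Jmax * ∑ i, ∑ j, u i j := by
  rw [Finset.mul_sum]
  refine (Finset.abs_sum_le_sum_abs _ _).trans (Finset.sum_le_sum fun i _ => ?_)
  rw [Finset.mul_sum]
  refine (Finset.abs_sum_le_sum_abs _ _).trans (Finset.sum_le_sum fun j _ => ?_)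
  rw [abs_mul]
  exact mul_le_mul (hJb i j) (hc i j) (abs_nonneg _) ((abs_nonneg _).trans (hJb i j))

theorem measurableSet_I01 : MeasurableSet I01 := measurableSet_Icc

theorem volume_real_I01 : volume.real I01 = 1 := by simp [I01, Real.volume_real_Icc]

theorem mem_I01_of_sum_eq_one {ι : Type*} [Fintype ι] {f : ι → ℝ} (hf : ∀ i, 0 ≤ f i)
    (hsum : ∑ i, f i = 1) (i : ι) : f i ∈ I01 :=
  ⟨hf i, hsum ▸ Finset.single_le_sum (fun j _ => hf j) (Finset.mem_univ i)⟩

theorem IsDist.nonempty {q : ℕ} {a : Fin q → ℝ} (ha : IsDist a) : Nonempty (Fin q) := by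
  rcases isEmpty_or_nonempty (Fin q) with h | h
  · simpa using ha.2
  · exact h

namespace FracPartition

variable {q : ℕ} (ρ : FracPartition q)

theorem nonneg (i : Fin q) {x : ℝ} (hx : x ∈ I01) : 0 ≤ ρ.toFun i x := (ρ.mem_I01 i x hx).1

theorem integrableOn (i : Fin q) : IntegrableOn (ρ.toFun i) I01 :=
  Measure.integrableOn_of_bounded (by simp [I01]) (ρ.measurable i).aestronglyMeasurable (M := 1)
    ((ae_restrict_iff' measurableSet_I01).2 (ae_of_all _ fun x hx =>
      abs_le.2 ⟨by linarith [ρ.nonneg i hx], (ρ.mem_I01 i x hx).2⟩))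

theorem integral_abs (i : Fin q) : ∫ x in I01, |ρ.toFun i x| = ∫ x in I01, ρ.toFun i x :=
  setIntegral_congr_fun measurableSet_I01 fun _ hx => abs_of_nonneg (ρ.nonneg i hx)

theorem sum_integral : ∑ i, ∫ x in I01, ρ.toFun i x = 1 := by
  rw [← integral_finsetSum _ fun i _ => ρ.integrableOn i,
    setIntegral_congr_fun measurableSet_I01 ρ.sum_one, setIntegral_const, volume_real_I01,
    one_smul]

def const (a : Fin q → ℝ) (ha : IsDist a) : FracPartition q where
  toFun i _ := a i
  measurable _ := measurable_const
  mem_I01 i _ _ := mem_I01_of_sum_eq_one ha.1 ha.2 i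
  sum_one _ _ := ha.2

theorem integral_const_toFun {a : Fin q → ℝ} (ha : IsDist a) (i : Fin q) :
    ∫ x in I01, (const a ha).toFun i x = a i := by
  simp [const, volume_real_I01]

variable {r s : Fin q → ℝ}

theorem integrableOn_mul_add_mul_sum (c d : ℝ) (k : Fin q) :
    IntegrableOn (fun x => c * ρ.toFun k x + d * ∑ j, r j * ρ.toFun j x) I01 :=
  ((ρ.integrableOn k).const_mul c).add
    ((integrable_finsetSum _ fun j _ => (ρ.integrableOn j).const_mul (r j)).const_mul d)

theorem integral_mul_add_mul_sum (c d : ℝ) (k : Fin q) :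
    ∫ x in I01, (c * ρ.toFun k x + d * ∑ j, r j * ρ.toFun j x) =
      c * (∫ x in I01, ρ.toFun k x) + d * ∑ j, r j * ∫ x in I01, ρ.toFun j x := by
  rw [integral_add ((ρ.integrableOn k).const_mul c)
      ((integrable_finsetSum _ fun j _ => (ρ.integrableOn j).const_mul (r j)).const_mul d),
    integral_const_mul, integral_const_mul,
    integral_finsetSum _ fun j _ => (ρ.integrableOn j).const_mul (r j)]
  simp only [integral_const_mul]

theorem sum_transfer (hs : ∑ k, s k = 1) {x : ℝ} (hx : x ∈ I01) :
    ∑ k, ((1 - r k) * ρ.toFun k x + s k * ∑ j, r j * ρ.toFun j x) = 1 := by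
  rw [Finset.sum_add_distrib, ← Finset.sum_mul, hs, one_mul, ← Finset.sum_add_distrib]
  simp only [sub_mul, one_mul, sub_add_cancel]
  exact ρ.sum_one x hx

def transfer (hr : ∀ k, r k ∈ I01) (hs0 : ∀ k, 0 ≤ s k) (hs : ∑ k, s k = 1) :
    FracPartition q where
  toFun k x := (1 - r k) * ρ.toFun k x + s k * ∑ j, r j * ρ.toFun j x
  measurable k := by
    have := ρ.measurable
    fun_prop
  mem_I01 k x hx := by
    refine mem_I01_of_sum_eq_one (fun k => ?_) (ρ.sum_transfer hs hx) k
    have hpool : 0 ≤ ∑ j, r j * ρ.toFun j x :=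
      Finset.sum_nonneg fun j _ => mul_nonneg (hr j).1 (ρ.nonneg j hx)
    exact add_nonneg (mul_nonneg (sub_nonneg.2 (hr k).2) (ρ.nonneg k hx))
      (mul_nonneg (hs0 k) hpool)
  sum_one _ hx := ρ.sum_transfer hs hx

variable {hr : ∀ k, r k ∈ I01} {hs0 : ∀ k, 0 ≤ s k} {hs : ∑ k, s k = 1}

theorem integral_transfer (k : Fin q) :
    ∫ x in I01, (ρ.transfer hr hs0 hs).toFun k x =
      (1 - r k) * (∫ x in I01, ρ.toFun k x) + s k * ∑ j, r j * ∫ x in I01, ρ.toFun j x :=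
  ρ.integral_mul_add_mul_sum _ _ k

theorem integral_abs_transfer_sub_le (k : Fin q) :
    ∫ x in I01, |(ρ.transfer hr hs0 hs).toFun k x - ρ.toFun k x| ≤
      r k * (∫ x in I01, ρ.toFun k x) + s k * ∑ j, r j * ∫ x in I01, ρ.toFun j x := by
  rw [← ρ.integral_mul_add_mul_sum]
  refine setIntegral_mono_on
    (((ρ.transfer hr hs0 hs).integrableOn k).sub (ρ.integrableOn k)).abs
    (ρ.integrableOn_mul_add_mul_sum _ _ k) measurableSet_I01 fun x hx => ?_
  have hpool : 0 ≤ ∑ j, r j * ρ.toFun j x :=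
    Finset.sum_nonneg fun j _ => mul_nonneg (hr j).1 (ρ.nonneg j hx)
  have hleft : 0 ≤ r k * ρ.toFun k x := mul_nonneg (hr k).1 (ρ.nonneg k hx)
  have hright : 0 ≤ s k * ∑ j, r j * ρ.toFun j x := mul_nonneg (hs0 k) hpool
  simp only [transfer]
  rw [abs_le]
  constructor <;> linarith

end FracPartition

theorem FracPartition.exists_integral_eq_and_integral_abs_sub_le {q : ℕ} (ρ : FracPartition q)
    {a b : Fin q → ℝ} (hρ : ∀ i, ∫ x in I01, ρ.toFun i x = a i) (ha : IsDist a) (hb : IsDist b) :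
    ∃ ρ' : FracPartition q, (∀ i, ∫ x in I01, ρ'.toFun i x = b i) ∧
      ∑ i, ∫ x in I01, |ρ'.toFun i x - ρ.toFun i x| ≤ ∑ i, |a i - b i| := by
  by_cases hab : a = b
  · subst hab
    exact ⟨ρ, hρ, by simp⟩
  set ε := ∑ i, (a i - b i)⁺
  have hneg : ∑ i, (a i - b i)⁻ = ε := by
    have : ∑ i, ((a i - b i)⁺ - (a i - b i)⁻) = 0 := by
      simp only [posPart_sub_negPart, Finset.sum_sub_distrib, ha.2, hb.2, sub_self]
    rw [Finset.sum_sub_distrib] at this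
    linarith
  have hε : 0 < ε := by
    obtain ⟨i, hi⟩ := Function.ne_iff.1 hab
    have hpos : 0 < ∑ i, |a i - b i| :=
      Finset.sum_pos' (fun i _ => abs_nonneg _)
        ⟨i, Finset.mem_univ i, abs_pos.2 (sub_ne_zero.2 hi)⟩
    have : ∑ i, |a i - b i| = ε + ε := by
      simp only [← posPart_add_negPart, Finset.sum_add_distrib, hneg, ε]
    linarith
  have hpos_le : ∀ i, (a i - b i)⁺ ≤ a i := fun i => by
    rw [posPart_def]
    exact sup_le (by linarith [hb.1 i]) (ha.1 i)
  set r : Fin q → ℝ := fun i => (a i - b i)⁺ / a i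
  set s : Fin q → ℝ := fun i => (a i - b i)⁻ / ε
  -- If `a i = 0` then `r i = 0 / 0 = 0`, and `(a i - b i)⁺ = 0` as well.
  have hra : ∀ i, r i * a i = (a i - b i)⁺ := fun i => by
    rcases eq_or_ne (a i) 0 with h | h
    · rw [h, mul_zero, le_antisymm (h ▸ hpos_le i) (posPart_nonneg _)]
    · exact div_mul_cancel₀ _ h
  have hr : ∀ i, r i ∈ I01 := fun i =>
    ⟨div_nonneg (posPart_nonneg _) (ha.1 i), div_le_one_of_le₀ (hpos_le i) (ha.1 i)⟩
  have hs0 : ∀ i, 0 ≤ s i := fun i => div_nonneg (negPart_nonneg _) hε.le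
  have hs : ∑ i, s i = 1 := by rw [← Finset.sum_div, hneg, div_self hε.ne']
  have hpool : ∑ j, r j * ∫ x in I01, ρ.toFun j x = ε := by simp only [hρ, hra]; rfl
  have hsε : ∀ i, s i * ε = (a i - b i)⁻ := fun i => div_mul_cancel₀ _ hε.ne'
  refine ⟨ρ.transfer hr hs0 hs, fun i => ?_, ?_⟩
  · rw [ρ.integral_transfer, hpool, hsε, hρ, sub_mul, hra, one_mul, sub_add,
      posPart_sub_negPart, sub_sub_cancel]
  · refine Finset.sum_le_sum fun i _ => (ρ.integral_abs_transfer_sub_le i).trans_eq ?_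
    rw [hpool, hsε, hρ, hra, posPart_add_negPart]

section Energy

variable {q : ℕ} {W : ℝ → ℝ → ℝ} {J : Matrix (Fin q) (Fin q) ℝ} {Wmax Jmax : ℝ}

theorem abs_energy_le (hWb : ∀ s t, |W s t| ≤ Wmax) (hJb : ∀ i j, |J i j| ≤ Jmax)
    (ρ : FracPartition q) : |energy W J ρ| ≤ Wmax * Jmax := by
  have hB : ∀ i j, |∫ x in I01, ∫ y in I01, ρ.toFun i x * ρ.toFun j y * W x y| ≤
      Wmax * (∫ x in I01, ρ.toFun i x) * ∫ y in I01, ρ.toFun j y := fun i j => by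
    simpa only [ρ.integral_abs] using
      abs_integral_integral_mul_le (ρ.integrableOn i) (ρ.integrableOn j) hWb
  calc |energy W J ρ| ≤ Jmax * ∑ i, ∑ j,
        Wmax * (∫ x in I01, ρ.toFun i x) * ∫ y in I01, ρ.toFun j y := by
        rw [energy, abs_neg]
        exact abs_sum_sum_mul_le hJb hB
    _ = Wmax * Jmax := by
        simp only [mul_assoc, ← Finset.mul_sum, ← Finset.sum_mul, ρ.sum_integral]
        ring

theorem abs_energy_sub_le (hW : Measurable (Function.uncurry W))
    (hWb : ∀ s t, |W s t| ≤ Wmax) (hJb : ∀ i j, |J i j| ≤ Jmax) (ρ ρ' : FracPartition q) :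
    |energy W J ρ' - energy W J ρ| ≤
      2 * (∑ k, ∫ x in I01, |ρ'.toFun k x - ρ.toFun k x|) * Wmax * Jmax := by
  set δ : Fin q → ℝ := fun k => ∫ x in I01, |ρ'.toFun k x - ρ.toFun k x|
  set B : FracPartition q → Fin q → Fin q → ℝ := fun σ i j =>
    ∫ x in I01, ∫ y in I01, σ.toFun i x * σ.toFun j y * W x y
  have hB : ∀ i j, |B ρ' i j - B ρ i j| ≤
      Wmax * δ i * (∫ y in I01, ρ'.toFun j y) + Wmax * (∫ x in I01, ρ.toFun i x) * δ j :=
    fun i j => by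
      rw [integral_integral_mul_sub_mul (ρ.integrableOn i) (ρ'.integrableOn i)
        (ρ.integrableOn j) (ρ'.integrableOn j) hW hWb, ← ρ'.integral_abs, ← ρ.integral_abs]
      exact (abs_add_le _ _).trans (add_le_add
        (abs_integral_integral_mul_le ((ρ'.integrableOn i).sub (ρ.integrableOn i))
          (ρ'.integrableOn j) hWb)
        (abs_integral_integral_mul_le (ρ.integrableOn i)
          ((ρ'.integrableOn j).sub (ρ.integrableOn j)) hWb))
  have hdiff : energy W J ρ' - energy W J ρ = -∑ i, ∑ j, J i j * (B ρ' i j - B ρ i j) := by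
    simp only [energy, B, mul_sub, Finset.sum_sub_distrib]
    ring
  calc |energy W J ρ' - energy W J ρ| ≤ Jmax * ∑ i, ∑ j,
        (Wmax * δ i * (∫ y in I01, ρ'.toFun j y) + Wmax * (∫ x in I01, ρ.toFun i x) * δ j) := by
        rw [hdiff, abs_neg]
        exact abs_sum_sum_mul_le hJb hB
    _ = 2 * (∑ k, δ k) * Wmax * Jmax := by
        simp only [Finset.sum_add_distrib, mul_assoc, ← Finset.mul_sum, ← Finset.sum_mul,
          ρ.sum_integral, ρ'.sum_integral]
        ring

end Energy

section GroundState

variable {q : ℕ} {W : ℝ → ℝ → ℝ} {J : Matrix (Fin q) (Fin q) ℝ} {Wmax Jmax : ℝ}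

theorem neg_le_mgse (hWb : ∀ s t, |W s t| ≤ Wmax) (hJb : ∀ i j, |J i j| ≤ Jmax)
    {a : Fin q → ℝ} (ha : IsDist a) : -(Wmax * Jmax) ≤ mgse W J a :=
  le_csInf ⟨_, .const a ha, FracPartition.integral_const_toFun ha, rfl⟩
    fun _ ⟨ρ, _, he⟩ => he ▸ (abs_le.1 (abs_energy_le hWb hJb ρ)).1

theorem mgse_le_add (hW : Measurable (Function.uncurry W))
    (hWb : ∀ s t, |W s t| ≤ Wmax) (hJb : ∀ i j, |J i j| ≤ Jmax)
    {a b : Fin q → ℝ} (ha : IsDist a) (hb : IsDist b) :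
    mgse W J b ≤ mgse W J a + 2 * (∑ i, |a i - b i|) * Wmax * Jmax := by
  obtain ⟨i₀⟩ := ha.nonempty
  have hW0 : 0 ≤ Wmax := (abs_nonneg _).trans (hWb 0 0)
  have hJ0 : 0 ≤ Jmax := (abs_nonneg _).trans (hJb i₀ i₀)
  have hbdd : BddBelow {e | ∃ ρ : FracPartition q,
      (∀ i, ∫ x in I01, ρ.toFun i x = b i) ∧ e = energy W J ρ} :=
    ⟨-(Wmax * Jmax), fun _ ⟨ρ, _, he⟩ => he ▸ (abs_le.1 (abs_energy_le hWb hJb ρ)).1⟩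
  rw [← sub_le_iff_le_add]
  refine le_csInf ⟨_, .const a ha, FracPartition.integral_const_toFun ha, rfl⟩ ?_
  rintro _ ⟨ρ, hρ, rfl⟩
  obtain ⟨ρ', hρ', hclose⟩ := ρ.exists_integral_eq_and_integral_abs_sub_le hρ ha hb
  have hmgse : mgse W J b ≤ energy W J ρ' := csInf_le hbdd ⟨ρ', hρ', rfl⟩
  have henergy := (abs_le.1 (abs_energy_sub_le hW hWb hJb ρ ρ')).2
  have hscale : 2 * (∑ k, ∫ x in I01, |ρ'.toFun k x - ρ.toFun k x|) * Wmax * Jmax ≤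
      2 * (∑ i, |a i - b i|) * Wmax * Jmax := by gcongr
  linarith

theorem exists_isDist_forall_le (hq : 1 ≤ q) {x : Fin q → ℝ} (hx : ∀ i, 0 ≤ x i)
    (hsum : ∑ i, x i ≤ 1) : ∃ a : Fin q → ℝ, IsDist a ∧ ∀ i, x i ≤ a i := by
  have hq0 : (q : ℝ) ≠ 0 := by positivity
  have hslack : 0 ≤ (1 - ∑ i, x i) / q := div_nonneg (by linarith) q.cast_nonneg
  refine ⟨fun i => x i + (1 - ∑ i, x i) / q,
    ⟨fun i => add_nonneg (hx i) hslack, ?_⟩, fun i => le_add_of_nonneg_right hslack⟩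
  rw [Finset.sum_add_distrib, Finset.sum_const, Finset.card_univ, Fintype.card_fin,
    nsmul_eq_mul, mul_div_cancel₀ _ hq0, add_sub_cancel]

theorem exists_isDist_sum_abs_sub_le {x x' : Fin q → ℝ} (hx' : ∀ i, 0 ≤ x' i)
    (hs : ∑ i, x i = ∑ i, x' i) {a : Fin q → ℝ} (ha : IsDist a) (hax : ∀ i, x i ≤ a i) :
    ∃ b : Fin q → ℝ, IsDist b ∧ (∀ i, x' i ≤ b i) ∧
      ∑ i, |a i - b i| ≤ ∑ i, |x i - x' i| := by
  refine ⟨fun i => a i - x i + x' i, ⟨fun i => by linarith [hax i, hx' i], ?_⟩,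
    fun i => by linarith [hax i], le_of_eq ?_⟩
  · rw [Finset.sum_add_distrib, Finset.sum_sub_distrib, ha.2, hs, sub_add_cancel]
  · exact Finset.sum_congr rfl fun i _ => congrArg abs (by ring)

theorem ltgseV_le_add (hW : Measurable (Function.uncurry W))
    (hWb : ∀ s t, |W s t| ≤ Wmax) (hJb : ∀ i j, |J i j| ≤ Jmax) {x x' : Fin q → ℝ}
    (hne : ∃ a : Fin q → ℝ, IsDist a ∧ ∀ i, x i ≤ a i) (hx' : ∀ i, 0 ≤ x' i)
    (hs : ∑ i, x i = ∑ i, x' i) :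
    ltgseV W J x' ≤ ltgseV W J x + 2 * (∑ i, |x i - x' i|) * Wmax * Jmax := by
  obtain ⟨a₀, ha₀, hxa₀⟩ := hne
  obtain ⟨i₀⟩ := ha₀.nonempty
  have hW0 : 0 ≤ Wmax := (abs_nonneg _).trans (hWb 0 0)
  have hJ0 : 0 ≤ Jmax := (abs_nonneg _).trans (hJb i₀ i₀)
  have hbdd : BddBelow {e | ∃ b : Fin q → ℝ, IsDist b ∧ (∀ i, x' i ≤ b i) ∧ e = mgse W J b} :=
    ⟨-(Wmax * Jmax), fun _ ⟨b, hb, _, he⟩ => he ▸ neg_le_mgse hWb hJb hb⟩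
  rw [← sub_le_iff_le_add]
  refine le_csInf ⟨_, a₀, ha₀, hxa₀, rfl⟩ ?_
  rintro _ ⟨a, ha, hax, rfl⟩
  obtain ⟨b, hb, hxb, hab⟩ := exists_isDist_sum_abs_sub_le hx' hs ha hax
  have hltgse : ltgseV W J x' ≤ mgse W J b := csInf_le hbdd ⟨b, hb, hxb, rfl⟩
  have hmgse := mgse_le_add hW hWb hJb ha hb
  have hscale : 2 * (∑ i, |a i - b i|) * Wmax * Jmax ≤
      2 * (∑ i, |x i - x' i|) * Wmax * Jmax := by gcongr
  linarith

end GroundState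

theorem stmt9_general (q : ℕ) (hq : 1 ≤ q) (h : ℝ) (hh : h ≤ 1)
    (x x' : Fin q → ℝ) (hx : ∀ i, 0 ≤ x i) (hx' : ∀ i, 0 ≤ x' i)
    (hxs : ∑ i, x i = h) (hx's : ∑ i, x' i = h)
    (W : ℝ → ℝ → ℝ) (hW : IsGraphon W) (J : Matrix (Fin q) (Fin q) ℝ)
    (Wmax Jmax : ℝ) (hWb : ∀ s t, |W s t| ≤ Wmax) (hJb : ∀ i j, |J i j| ≤ Jmax) :
    (∀ a : Fin q → ℝ, IsDist a → (∀ i, x i ≤ a i) →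
      ∃ b : Fin q → ℝ, IsDist b ∧ (∀ i, x' i ≤ b i) ∧
        ∑ i, |a i - b i| ≤ ∑ i, |x i - x' i|) ∧
    |ltgseV W J x - ltgseV W J x'| ≤ 2 * (∑ i, |x i - x' i|) * Wmax * Jmax := by
  have hs : ∑ i, x i = ∑ i, x' i := hxs.trans hx's.symm
  have hsymm : ∑ i, |x' i - x i| = ∑ i, |x i - x' i| :=
    Finset.sum_congr rfl fun i _ => abs_sub_comm _ _
  have hle := ltgseV_le_add hW.1 hWb hJb (exists_isDist_forall_le hq hx (hxs ▸ hh)) hx' hs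
  have hge := ltgseV_le_add hW.1 hWb hJb (exists_isDist_forall_le hq hx' (hx's ▸ hh)) hx hs.symm
  rw [hsymm] at hge
  exact ⟨fun a ha hax => exists_isDist_sum_abs_sub_le hx' hs ha hax,
    abs_sub_le_iff.2 ⟨by linarith, by linarith⟩⟩

theorem stmt9 (q : ℕ) (hq : 1 ≤ q) (h : ℝ) (hh : h ≤ 1)
    (x x' : Fin q → ℝ) (hx : ∀ i, 0 ≤ x i) (hx' : ∀ i, 0 ≤ x' i)
    (hxs : ∑ i, x i = h) (hx's : ∑ i, x' i = h)
    (W : ℝ → ℝ → ℝ) (hW : IsGraphon W) (J : Matrix (Fin q) (Fin q) ℝ) (hJ : J.IsSymm)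
    (Wmax Jmax : ℝ) (hWb : ∀ s t, |W s t| ≤ Wmax) (hJb : ∀ i j, |J i j| ≤ Jmax) :
    (∀ a : Fin q → ℝ, IsDist a → (∀ i, x i ≤ a i) →
      ∃ b : Fin q → ℝ, IsDist b ∧ (∀ i, x' i ≤ b i) ∧
        ∑ i, |a i - b i| ≤ ∑ i, |x i - x' i|) ∧
    |ltgseV W J x - ltgseV W J x'| ≤ 2 * (∑ i, |x i - x' i|) * Wmax * Jmax :=
  stmt9_general q hq h hh x x' hx hx' hxs hx's W hW J Wmax Jmax hWb hJb
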